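/- arXiv:2303.16110 — 2 statements merged into one kernel-verified Lean document; each statement's English description precedes it below -/
import Mathlib

section
/- Let u, Δu ∈ ℝ^N with weighted average ⟨·⟩ using positive weights w_j summing over j, let Δū := Δu - ⟨Δu⟩·1, and let G ∈ ℝ^N with ⟨G⟩ = 0 and ⟨G²⟩ := Σ_j G_j² w_j > 0. Suppose the discriminant condition 1 - ⟨G²⟩(2⟨u|Δū⟩ + ⟨Δū²⟩ - 2Δℓ₂)/⟨u + Δū|G⟩² ≥ 0 holds and ⟨u + Δū|G⟩ ≠ 0. Then setting ε = (⟨u + Δū|G⟩/⟨G²⟩)·(-1 + √(1 - ⟨G²⟩(2⟨u|Δū⟩ + ⟨Δū²⟩ - 2Δℓ₂)/⟨u + Δū|G⟩²)) and defining the corrected update Δu' := Δū + εG, we have ⟨Δu'⟩ = 0 and ½⟨(u + Δu')²⟩ = ½⟨u²⟩ + Δℓ₂. -/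
/-!
The correction `εG` is orthogonal to the constants for the weights, so it does not change the
average, and `Δū` has average zero by construction. Since `½⟨(u + Δū + εG)²⟩` is a quadratic
polynomial in `ε`, asking it to equal `½⟨u²⟩ + Δℓ₂` is the quadratic equation in the statement,
and the prescribed `ε` is one of its roots.
-/

open Finset

section WeightedMeans

variable {ι : Type*} [Fintype ι] (w : ι → ℝ)

noncomputable def weightedAvg (a : ι → ℝ) : ℝ := (∑ j, a j * w j) / ∑ j, w j

def weightedInner (a b : ι → ℝ) : ℝ := ∑ j, a j * b j * w j

theorem weightedAvg_add_mul (a b : ι → ℝ) (ε : ℝ) :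
    weightedAvg w (fun j => a j + ε * b j) = weightedAvg w a + ε * weightedAvg w b := by
  simp only [weightedAvg, add_mul, sum_add_distrib, mul_assoc, ← mul_sum, add_div, mul_div_assoc]

theorem weightedAvg_sub_weightedAvg (a : ι → ℝ) :
    weightedAvg w (fun j => a j - weightedAvg w a) = 0 := by
  rcases eq_or_ne (∑ j, w j) 0 with hw | hw
  · simp only [weightedAvg, hw, div_zero]
  · simp only [weightedAvg, sub_mul, sum_sub_distrib, ← mul_sum]
    field_simp
    ring

theorem weightedInner_add_add_mul_self (u d g : ι → ℝ) (ε : ℝ) :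
    weightedInner w (fun j => u j + (d j + ε * g j)) (fun j => u j + (d j + ε * g j)) =
      weightedInner w u u + (2 * weightedInner w u d + weightedInner w d d) +
        (2 * ε * weightedInner w (fun j => u j + d j) g + ε ^ 2 * weightedInner w g g) := by
  simp only [weightedInner, mul_sum, ← sum_add_distrib]
  exact sum_congr rfl fun j _ => by ring

end WeightedMeans

theorem quadratic_eq_zero_of_eq_div_mul_neg_one_add_sqrt {a b c ε : ℝ} (ha : a ≠ 0) (hb : b ≠ 0)
    (hdisc : 0 ≤ 1 - a * c / b ^ 2) (hε : ε = b / a * (-1 + √(1 - a * c / b ^ 2))) :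
    a * ε ^ 2 + 2 * b * ε + c = 0 := by
  have hs := Real.sq_sqrt hdisc
  set s := √(1 - a * c / b ^ 2)
  have hexpand : a * ε ^ 2 + 2 * b * ε = b ^ 2 / a * (s ^ 2 - 1) := by
    rw [hε]
    field_simp
    ring
  rw [hexpand, hs]
  field_simp
  ring

theorem stmt4_general (N : ℕ) (w : Fin N → ℝ)
    (u Δu G : Fin N → ℝ) (Δl : ℝ)
    (avg : (Fin N → ℝ) → ℝ) (ip : (Fin N → ℝ) → (Fin N → ℝ) → ℝ)
    (havg : ∀ a, avg a = (∑ j, a j * w j) / (∑ j, w j))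
    (hip : ∀ a b, ip a b = ∑ j, a j * b j * w j)
    (Δub : Fin N → ℝ) (hΔub : Δub = fun j => Δu j - avg Δu)
    (hGavg : avg G = 0) (hGG : 0 < ip G G)
    (hC : ip (fun j => u j + Δub j) G ≠ 0)
    (hdisc : 0 ≤ 1 - ip G G * (2 * ip u Δub + ip Δub Δub - 2 * Δl) /
        (ip (fun j => u j + Δub j) G) ^ 2)
    (ε : ℝ)
    (hε : ε = (ip (fun j => u j + Δub j) G / ip G G) *
      (-1 + Real.sqrt (1 - ip G G * (2 * ip u Δub + ip Δub Δub - 2 * Δl) /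
        (ip (fun j => u j + Δub j) G) ^ 2)))
    (Δu' : Fin N → ℝ) (hΔu' : Δu' = fun j => Δub j + ε * G j) :
    avg Δu' = 0 ∧
      (1 / 2) * ip (fun j => u j + Δu' j) (fun j => u j + Δu' j) =
        (1 / 2) * ip u u + Δl := by
  obtain rfl : avg = weightedAvg w := funext havg
  obtain rfl : ip = weightedInner w := funext fun a => funext (hip a)
  subst hΔu'
  constructor
  · rw [weightedAvg_add_mul, hGavg, hΔub, weightedAvg_sub_weightedAvg, mul_zero, add_zero]
  · have hquad := quadratic_eq_zero_of_eq_div_mul_neg_one_add_sqrt hGG.ne' hC hdisc hε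
    rw [weightedInner_add_add_mul_self]
    linarith

/-- Discrete-time error correction: with weights `w_j > 0`, weighted average
`⟨a⟩ = Σ a_j w_j / Σ w_j` and inner product `⟨a|b⟩ = Σ a_j b_j w_j`, with
`Δū = Δu - ⟨Δu⟩1`, `⟨G⟩ = 0`, `⟨G²⟩ > 0`, `⟨u+Δū|G⟩ ≠ 0`, and the discriminant
nonnegative, the choice of `ε` with the plus sign makes `Δu' = Δū + εG` satisfy
`⟨Δu'⟩ = 0` and `½⟨(u+Δu')²⟩ = ½⟨u²⟩ + Δℓ₂`. -/
theorem stmt4 (N : ℕ) (w : Fin N → ℝ) (hw : ∀ j, 0 < w j)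
    (u Δu G : Fin N → ℝ) (Δl : ℝ)
    (avg : (Fin N → ℝ) → ℝ) (ip : (Fin N → ℝ) → (Fin N → ℝ) → ℝ)
    (havg : ∀ a, avg a = (∑ j, a j * w j) / (∑ j, w j))
    (hip : ∀ a b, ip a b = ∑ j, a j * b j * w j)
    (Δub : Fin N → ℝ) (hΔub : Δub = fun j => Δu j - avg Δu)
    (hGavg : avg G = 0) (hGG : 0 < ip G G)
    (hC : ip (fun j => u j + Δub j) G ≠ 0)
    (hdisc : 0 ≤ 1 - ip G G * (2 * ip u Δub + ip Δub Δub - 2 * Δl) /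
        (ip (fun j => u j + Δub j) G) ^ 2)
    (ε : ℝ)
    (hε : ε = (ip (fun j => u j + Δub j) G / ip G G) *
      (-1 + Real.sqrt (1 - ip G G * (2 * ip u Δub + ip Δub Δub - 2 * Δl) /
        (ip (fun j => u j + Δub j) G) ^ 2)))
    (Δu' : Fin N → ℝ) (hΔu' : Δu' = fun j => Δub j + ε * G j) :
    avg Δu' = 0 ∧
      (1 / 2) * ip (fun j => u j + Δu' j) (fun j => u j + Δu' j) =
        (1 / 2) * ip u u + Δl :=
  stmt4_general N w u Δu G Δl avg ip havg hip Δub hΔub hGavg hGG hC hdisc ε hε Δu' hΔu'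
end

section
/- For the 1D compressible Euler equations with equation of state E = p/(γ-1) + ½ρv², the function p* := ((γ-1)/(γ+1))·(p/ρ^γ)^{1/(γ+1)} and entropy η = ρ·e^{s/(γ+1)} with s = log(p/ρ^γ) satisfy: the gradient of η with respect to the conserved variables u = (ρ, ρv, E) is w = (p*/p)·(E, -ρv, ρ). -/
/-! On the physical region `ρ > 0`, `p > 0` the entropy simplifies to
`η = ρ (p / ρ^γ)^(1/(γ+1)) = (ρ p)^(1/(γ+1))`, and `ρ p = (γ - 1)(u₁ u₃ - u₂² / 2)` is a polynomial
in the conserved variables with gradient `(γ - 1)(u₃, -u₂, u₁)`. The chain rule gives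
`∇η = (1/(γ+1)) (ρ p)^(-γ/(γ+1)) (γ - 1)(E, -ρv, ρ)`, and `(ρ p)^(-γ/(γ+1)) = (p / ρ^γ)^(1/(γ+1)) / p`. -/

noncomputable def eulerPressure (γ u₁ u₂ u₃ : ℝ) : ℝ := (γ - 1) * (u₃ - u₂ ^ 2 / (2 * u₁))

noncomputable def eulerEntropy (γ u₁ u₂ u₃ : ℝ) : ℝ :=
  u₁ * (eulerPressure γ u₁ u₂ u₃ / u₁ ^ γ) ^ (1 / (γ + 1))

lemma eulerPressure_mul (γ u₁ u₂ u₃ : ℝ) (h₁ : u₁ ≠ 0) :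
    u₁ * eulerPressure γ u₁ u₂ u₃ = (γ - 1) * (u₁ * u₃ - u₂ ^ 2 / 2) := by
  unfold eulerPressure
  field_simp

lemma rpow_mul_div_rpow_eq {ρ p γ : ℝ} (hρ : 0 < ρ) (hp : 0 ≤ p) (hγ : γ + 1 ≠ 0) :
    ρ * (p / ρ ^ γ) ^ (1 / (γ + 1)) = (ρ * p) ^ (1 / (γ + 1)) := by
  have hexp : 1 - γ * (1 / (γ + 1)) = 1 / (γ + 1) := by field_simp; ring
  calc ρ * (p / ρ ^ γ) ^ (1 / (γ + 1)) = ρ ^ (1 - γ * (1 / (γ + 1))) * p ^ (1 / (γ + 1)) := by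
        rw [Real.div_rpow hp (Real.rpow_nonneg hρ.le _), ← Real.rpow_mul hρ.le,
          Real.rpow_sub hρ, Real.rpow_one]
        ring
    _ = (ρ * p) ^ (1 / (γ + 1)) := by rw [hexp, Real.mul_rpow hρ.le hp]

lemma div_rpow_div_eq_rpow_sub_one {ρ p γ : ℝ} (hρ : 0 < ρ) (hp : 0 < p) (hγ : γ + 1 ≠ 0) :
    (p / ρ ^ γ) ^ (1 / (γ + 1)) / p = (ρ * p) ^ (1 / (γ + 1) - 1) := by
  rw [Real.rpow_sub_one (by positivity), ← rpow_mul_div_rpow_eq hρ hp.le hγ]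
  field_simp

lemma eulerEntropy_eq_rpow {γ u₁ u₂ u₃ : ℝ} (hγ : γ + 1 ≠ 0) (h₁ : 0 < u₁)
    (hp : 0 ≤ eulerPressure γ u₁ u₂ u₃) :
    eulerEntropy γ u₁ u₂ u₃ = ((γ - 1) * (u₁ * u₃ - u₂ ^ 2 / 2)) ^ (1 / (γ + 1)) := by
  rw [eulerEntropy, rpow_mul_div_rpow_eq h₁ hp hγ, eulerPressure_mul _ _ _ _ h₁.ne']

lemma hasDerivAt_eulerEntropy_comp {γ t d₁ d₂ d₃ : ℝ} {f₁ f₂ f₃ : ℝ → ℝ} (hγ : γ + 1 ≠ 0)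
    (h₁ : HasDerivAt f₁ d₁ t) (h₂ : HasDerivAt f₂ d₂ t) (h₃ : HasDerivAt f₃ d₃ t)
    (hf₁ : 0 < f₁ t) (hp : 0 < eulerPressure γ (f₁ t) (f₂ t) (f₃ t)) :
    HasDerivAt (fun s => eulerEntropy γ (f₁ s) (f₂ s) (f₃ s))
      ((γ - 1) * (d₁ * f₃ t + f₁ t * d₃ - f₂ t * d₂) * (1 / (γ + 1)) *
        ((γ - 1) * (f₁ t * f₃ t - f₂ t ^ 2 / 2)) ^ (1 / (γ + 1) - 1)) t := by
  have hpressure : ContinuousAt (fun s => eulerPressure γ (f₁ s) (f₂ s) (f₃ s)) t :=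
    continuousAt_const.mul (h₃.continuousAt.sub ((h₂.continuousAt.pow 2).div
      (continuousAt_const.mul h₁.continuousAt) (by positivity)))
  have heq : (fun s => eulerEntropy γ (f₁ s) (f₂ s) (f₃ s)) =ᶠ[nhds t]
      fun s => ((γ - 1) * (f₁ s * f₃ s - f₂ s ^ 2 / 2)) ^ (1 / (γ + 1)) := by
    filter_upwards [continuousAt_const.eventually_lt h₁.continuousAt hf₁,
      continuousAt_const.eventually_lt hpressure hp] with s hs₁ hsp
    exact eulerEntropy_eq_rpow hγ hs₁ hsp.le
  have hP : HasDerivAt (fun s => (γ - 1) * (f₁ s * f₃ s - f₂ s ^ 2 / 2))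
      ((γ - 1) * (d₁ * f₃ t + f₁ t * d₃ - f₂ t * d₂)) t := by
    refine (((h₁.fun_mul h₃).fun_sub ((h₂.fun_pow 2).div_const 2)).const_mul (γ - 1)).congr_deriv
      ?_
    push_cast
    ring
  have hPpos : (γ - 1) * (f₁ t * f₃ t - f₂ t ^ 2 / 2) ≠ 0 := by
    rw [← eulerPressure_mul _ _ _ _ hf₁.ne']
    positivity
  exact (hP.rpow_const (Or.inl hPpos)).congr_of_eventuallyEq heq

lemma eulerPressure_conserved {γ ρ v p : ℝ} (hγ : γ ≠ 1) :
    eulerPressure γ ρ (ρ * v) (p / (γ - 1) + ρ * v ^ 2 / 2) = p := by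
  unfold eulerPressure
  field_simp [sub_ne_zero.mpr hγ]
  ring

/-- For the 1D compressible Euler equations with `E = p/(γ-1) + ½ρv²`,
`p* = ((γ-1)/(γ+1))(p/ρ^γ)^{1/(γ+1)}`, and entropy
`η(u₁,u₂,u₃) = u₁ ((γ-1)(u₃ - u₂²/(2u₁))/u₁^γ)^{1/(γ+1)}` (i.e.
`η = ρ e^{s/(γ+1)}`, `s = log(p/ρ^γ)`), the gradient of `η` with respect to
the conserved variables `u = (ρ, ρv, E)` is `w = (p*/p)(E, -ρv, ρ)`. -/
theorem stmt16 (γ ρ v p E : ℝ) (hρ : 0 < ρ) (hp : 0 < p) (hγ : 1 < γ)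
    (hE : E = p / (γ - 1) + ρ * v ^ 2 / 2)
    (η : ℝ → ℝ → ℝ → ℝ)
    (hη : ∀ u1 u2 u3, η u1 u2 u3 =
      u1 * (((γ - 1) * (u3 - u2 ^ 2 / (2 * u1))) / u1 ^ γ) ^ (1 / (γ + 1)))
    (pstar : ℝ)
    (hpstar : pstar = (γ - 1) / (γ + 1) * (p / ρ ^ γ) ^ (1 / (γ + 1))) :
    HasDerivAt (fun u1 => η u1 (ρ * v) E) (pstar / p * E) ρ ∧
    HasDerivAt (fun u2 => η ρ u2 E) (pstar / p * (-(ρ * v))) (ρ * v) ∧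
    HasDerivAt (fun u3 => η ρ (ρ * v) u3) (pstar / p * ρ) E := by
  have hγ₁ : γ + 1 ≠ 0 := by linarith
  obtain rfl : η = eulerEntropy γ := funext₃ hη
  have hpres : eulerPressure γ ρ (ρ * v) E = p := hE ▸ eulerPressure_conserved hγ.ne'
  have hρp : (γ - 1) * (ρ * E - (ρ * v) ^ 2 / 2) = ρ * p := by
    rw [← eulerPressure_mul _ _ _ _ hρ.ne', hpres]
  have hfactor : pstar / p = (γ - 1) / (γ + 1) * (ρ * p) ^ (1 / (γ + 1) - 1) := by
    rw [hpstar, mul_div_assoc, div_rpow_div_eq_rpow_sub_one hρ hp hγ₁]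
  have hpres_pos : 0 < eulerPressure γ ρ (ρ * v) E := hpres ▸ hp
  refine ⟨(hasDerivAt_eulerEntropy_comp hγ₁ (hasDerivAt_id' ρ) (hasDerivAt_const ρ (ρ * v))
      (hasDerivAt_const ρ E) hρ hpres_pos).congr_deriv ?_,
    (hasDerivAt_eulerEntropy_comp hγ₁ (hasDerivAt_const (ρ * v) ρ) (hasDerivAt_id' _)
      (hasDerivAt_const (ρ * v) E) hρ hpres_pos).congr_deriv ?_,
    (hasDerivAt_eulerEntropy_comp hγ₁ (hasDerivAt_const E ρ) (hasDerivAt_const E (ρ * v))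
      (hasDerivAt_id' E) hρ hpres_pos).congr_deriv ?_⟩ <;>
  · rw [hρp, hfactor]
    ring
end
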